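/- Proposition 4.4, unconditional form (superadditivity of the set-valued gauge): Let E be a finite-dimensional real inner product space, (Ω, μ) a probability space, and g : (Ω → EReal) → EReal superadditive in the sense that g (f + f') ≥ g f + g f' for all f, f' : Ω → EReal with f ω > ⊥ and f' ω > ⊥ for all ω, whenever the sum g f + g f' is well defined (not of the form ⊥ + ⊤ or ⊤ + ⊥). Let X', X'' : Ω → Set E be set-valued maps with X' ω and X'' ω nonempty for all ω, and define their Minkowski sum pointwise: (X' + X'') ω := {x' + x'' | x' ∈ X' ω, x'' ∈ X'' ω}. Then G(X') + G(X'') ⊆ G(X' + X''), where the left-hand side is the Minkowski sum of the two set-valued gauges. -/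

import Mathlib

/-! Support functions are additive under Minkowski sums of sets, so in each direction `w`
the superadditivity of `g` bounds `⟪x' + x'', w⟫` by the gauge value of `X' + X''`;
nonemptiness keeps the support functions above `⊥`, as `g` requires. -/

open MeasureTheory RealInnerProductSpace Pointwise

/-- The support function of a set `A ⊆ E` in direction `w`, with values in the
extended reals (equal to `⊥` for `A = ∅`). -/
noncomputable def suppFn {E : Type*} [NormedAddCommGroup E] [InnerProductSpace ℝ E]
    (A : Set E) (w : E) : EReal :=
  ⨆ x ∈ A, ((⟪x, w⟫ : ℝ) : EReal)

/-- The unconditional set-valued gauge of a set-valued map `X`, for a functional `g`. -/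
def gaugeSet {E : Type*} [NormedAddCommGroup E] [InnerProductSpace ℝ E]
    {Ω : Type*} (g : (Ω → EReal) → EReal) (X : Ω → Set E) : Set E :=
  ⋂ w ∈ Metric.sphere (0 : E) 1,
    {x : E | ((⟪x, w⟫ : ℝ) : EReal) ≤ g (fun ω => suppFn (X ω) w)}

section

variable {E : Type*} [NormedAddCommGroup E] [InnerProductSpace ℝ E]

lemma coe_inner_add_left (x y w : E) :
    ((⟪x + y, w⟫ : ℝ) : EReal) = ((⟪x, w⟫ : ℝ) : EReal) + ((⟪y, w⟫ : ℝ) : EReal) := by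
  rw [inner_add_left, EReal.coe_add]

lemma inner_le_suppFn {A : Set E} {a : E} (ha : a ∈ A) (w : E) :
    ((⟪a, w⟫ : ℝ) : EReal) ≤ suppFn A w :=
  le_iSup₂_of_le a ha le_rfl

lemma bot_lt_suppFn {A : Set E} (hA : A.Nonempty) (w : E) : ⊥ < suppFn A w :=
  let ⟨_, ha⟩ := hA
  (EReal.bot_lt_coe _).trans_le (inner_le_suppFn ha w)

/-- For `A = ∅` this relies on the convention `⊥ + ⊤ = ⊥` in `EReal`. -/
lemma suppFn_add (A B : Set E) (w : E) :
    suppFn (A + B) w = suppFn A w + suppFn B w := by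
  apply le_antisymm
  · refine iSup₂_le fun x hx => ?_
    obtain ⟨a, ha, b, hb, rfl⟩ := hx
    rw [coe_inner_add_left]
    exact add_le_add (inner_le_suppFn ha w) (inner_le_suppFn hb w)
  · refine EReal.add_le_of_forall_lt fun s hs t ht => ?_
    obtain ⟨a, ha, hsa⟩ : ∃ a ∈ A, s < ⟪a, w⟫ := by simpa [suppFn, lt_iSup_iff] using hs
    obtain ⟨b, hb, htb⟩ : ∃ b ∈ B, t < ⟪b, w⟫ := by simpa [suppFn, lt_iSup_iff] using ht
    calc s + t ≤ ((⟪a, w⟫ : ℝ) : EReal) + ((⟪b, w⟫ : ℝ) : EReal) := add_le_add hsa.le htb.le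
      _ = ((⟪a + b, w⟫ : ℝ) : EReal) := (coe_inner_add_left a b w).symm
      _ ≤ suppFn (A + B) w := inner_le_suppFn (Set.add_mem_add ha hb) w

lemma mem_gaugeSet {Ω : Type*} {g : (Ω → EReal) → EReal} {X : Ω → Set E} {x : E} :
    x ∈ gaugeSet g X ↔
      ∀ w ∈ Metric.sphere (0 : E) 1, ((⟪x, w⟫ : ℝ) : EReal) ≤ g (fun ω => suppFn (X ω) w) := by
  simp only [gaugeSet, Set.mem_iInter, Set.mem_ofPred]

end

theorem gaugeSet_superadditive_general
    {E : Type*} [NormedAddCommGroup E] [InnerProductSpace ℝ E]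
    {Ω : Type*}
    (g : (Ω → EReal) → EReal)
    (hg : ∀ f f' : Ω → EReal, (∀ ω, ⊥ < f ω) → (∀ ω, ⊥ < f' ω) →
      ¬(g f = ⊥ ∧ g f' = ⊤) → ¬(g f = ⊤ ∧ g f' = ⊥) →
      g f + g f' ≤ g (f + f'))
    (X' X'' : Ω → Set E)
    (hX' : ∀ ω, (X' ω).Nonempty) (hX'' : ∀ ω, (X'' ω).Nonempty) :
    gaugeSet g X' + gaugeSet g X'' ⊆ gaugeSet g (fun ω => X' ω + X'' ω) := by
  rintro _ ⟨x', hx', x'', hx'', rfl⟩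
  refine mem_gaugeSet.2 fun w hw => ?_
  set f : Ω → EReal := fun ω => suppFn (X' ω) w
  set f' : Ω → EReal := fun ω => suppFn (X'' ω) w
  have h' : ((⟪x', w⟫ : ℝ) : EReal) ≤ g f := mem_gaugeSet.1 hx' w hw
  have h'' : ((⟪x'', w⟫ : ℝ) : EReal) ≤ g f' := mem_gaugeSet.1 hx'' w hw
  have hf : g f ≠ ⊥ := ne_bot_of_le_ne_bot (EReal.coe_ne_bot _) h'
  have hf' : g f' ≠ ⊥ := ne_bot_of_le_ne_bot (EReal.coe_ne_bot _) h''
  have hsuper : g f + g f' ≤ g (f + f') :=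
    hg f f' (fun ω => bot_lt_suppFn (hX' ω) w) (fun ω => bot_lt_suppFn (hX'' ω) w)
      (fun h => hf h.1) (fun h => hf' h.2)
  have hsum : f + f' = fun ω => suppFn (X' ω + X'' ω) w :=
    funext fun ω => (suppFn_add (X' ω) (X'' ω) w).symm
  calc ((⟪x' + x'', w⟫ : ℝ) : EReal)
      = ((⟪x', w⟫ : ℝ) : EReal) + ((⟪x'', w⟫ : ℝ) : EReal) := coe_inner_add_left x' x'' w
    _ ≤ g f + g f' := add_le_add h' h''
    _ ≤ g (f + f') := hsuper
    _ = _ := by rw [hsum]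

/-- Proposition 4.4, unconditional form: for a superadditive functional `g`, the
Minkowski sum of the set-valued gauges is contained in the set-valued gauge of the
Minkowski sum. -/
theorem gaugeSet_superadditive
    {E : Type*} [NormedAddCommGroup E] [InnerProductSpace ℝ E] [FiniteDimensional ℝ E]
    {Ω : Type*} [MeasurableSpace Ω] (μ : Measure Ω) [IsProbabilityMeasure μ]
    (g : (Ω → EReal) → EReal)
    (hg : ∀ f f' : Ω → EReal, (∀ ω, ⊥ < f ω) → (∀ ω, ⊥ < f' ω) →
      ¬(g f = ⊥ ∧ g f' = ⊤) → ¬(g f = ⊤ ∧ g f' = ⊥) →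
      g f + g f' ≤ g (f + f'))
    (X' X'' : Ω → Set E)
    (hX' : ∀ ω, (X' ω).Nonempty) (hX'' : ∀ ω, (X'' ω).Nonempty) :
    gaugeSet g X' + gaugeSet g X'' ⊆ gaugeSet g (fun ω => X' ω + X'' ω) :=
  gaugeSet_superadditive_general g hg X' X'' hX' hX''
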